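/- Let φ : Σ* → Σ* be a total bijective function (permutation of binary strings), and let p be a polynomial with |s| ≤ p(|φ(s)|) for all s. Define Γ_n := Σ_{i=0}^{n} (p(i)+2), γ_n := Γ_n − (p(n)+2), δ_{s,n} := p(n) − |s|, and the partial function ψ mapping 0^{γ_n} 1 0^{δ_{s,n}} 1 s ↦ 0^{Γ_n−(n+1)} 1 φ(s) whenever |φ(s)| = n. Then ψ is injective on its domain and length-preserving: every string in the domain of ψ of length Γ_n is mapped to a string of length Γ_n. -/
import Mathlib

lemma repl_true_eq : ∀ {a a' : ℕ} {r r' : List Bool},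
    List.replicate a false ++ true :: r = List.replicate a' false ++ true :: r' →
    a = a' ∧ r = r' := by
  intro a
  induction a with
  | zero =>
    intro a' r r' h
    cases a' with
    | zero => simpa using h
    | succ b => simp [List.replicate_succ] at h
  | succ b ih =>
    intro a' r r' h
    cases a' with
    | zero => simp [List.replicate_succ] at h
    | succ c =>
      simp only [List.replicate_succ, List.cons_append, List.cons.injEq] at h
      obtain ⟨heq, hr⟩ := ih h.2
      exact ⟨by omega, hr⟩

/-- From a total bijective, polynomially honest φ on binary strings,
the padded partial function ψ : 0^{γ_n} 1 0^{δ_{s,n}} 1 s ↦ 0^{Γ_n−(n+1)} 1 φ(s)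
(for n = |φ(s)|) is injective on its domain and length-preserving: inputs and outputs
associated with s both have length Γ_{|φ(s)|}. -/
theorem stmt17 (φ : List Bool → List Bool) (hφ : Function.Bijective φ)
    (p : ℕ → ℕ) (hp : Monotone p)
    (hhonest : ∀ s : List Bool, s.length ≤ p (φ s).length)
    (Γ : ℕ → ℕ) (hΓ : ∀ n : ℕ, Γ n = ∑ i ∈ Finset.range (n + 1), (p i + 2))
    (ψin ψout : List Bool → List Bool)
    (hin : ∀ s : List Bool, ψin s =
      List.replicate (Γ (φ s).length - (p (φ s).length + 2)) false ++ [true] ++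
        List.replicate (p (φ s).length - s.length) false ++ [true] ++ s)
    (hout : ∀ s : List Bool, ψout s =
      List.replicate (Γ (φ s).length - ((φ s).length + 1)) false ++ [true] ++ φ s) :
    Function.Injective ψin ∧ Function.Injective ψout ∧
      ∀ s : List Bool, (ψin s).length = Γ (φ s).length ∧
        (ψout s).length = Γ (φ s).length := by
  have hterm : ∀ n : ℕ, p n + 2 ≤ Γ n := by
    intro n
    rw [hΓ n]
    exact Finset.single_le_sum (f := fun i => p i + 2) (fun i _ => Nat.zero_le _)
      (Finset.self_mem_range_succ n)
  have hlow : ∀ n : ℕ, n + 1 ≤ Γ n := by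
    intro n
    rw [hΓ n]
    calc n + 1 ≤ 2 * (n + 1) := by omega
    _ = ∑ _i ∈ Finset.range (n + 1), 2 := by
        simp [Finset.sum_const, Finset.card_range, Nat.mul_comm]
    _ ≤ ∑ i ∈ Finset.range (n + 1), (p i + 2) :=
        Finset.sum_le_sum (fun i _ => by omega)
  refine ⟨?_, ?_, ?_⟩
  · intro s t h
    rw [hin s, hin t] at h
    simp only [List.append_assoc, List.singleton_append] at h
    obtain ⟨_, h2⟩ := repl_true_eq h
    exact (repl_true_eq h2).2
  · intro s t h
    rw [hout s, hout t] at h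
    simp only [List.append_assoc, List.singleton_append] at h
    exact hφ.1 (repl_true_eq h).2
  · intro s
    constructor
    · rw [hin s]
      have h1 := hterm (φ s).length
      have h2 := hhonest s
      simp only [List.length_append, List.length_replicate, List.length_singleton]
      omega
    · rw [hout s]
      have h1 := hlow (φ s).length
      simp only [List.length_append, List.length_replicate, List.length_singleton]
      omega
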